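/- Let T, S ∈ L(E) satisfy STS = TS with 0 ≠ S ≠ I, and suppose the closure of Ran(S) and Ker(I−S) are orthogonally complemented submodules of E. Then for every positive integer n, T maps Ker((I−S)^n) into Ker(I−S); consequently Ker((I−S)^n) is T-invariant. -/

import Mathlib

/-!
Writing `STS = TS` as `(I - S) T S = 0` gives `(I - S) T (I - S) = (I - S) T`, hence
`(I - S) T (I - S)^n = (I - S) T` for all `n`. So `(I - S) T` kills `Ker ((I - S)^n)`, and
`Ker (I - S) ⊆ Ker ((I - S)^n)` for `n > 0`.
-/

open scoped RightActions

/-- The December 2024 Mathlib `CStarModule`: a right Hilbert C*-module (`A` acts on the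
right through `Aᵐᵒᵖ`, inner product `A`-linear in the second argument on the right). -/
class RightCStarModule (A E : Type*) [NonUnitalSemiring A] [StarRing A] [Module ℂ A]
    [AddCommGroup E] [Module ℂ E] [PartialOrder A] [SMul Aᵐᵒᵖ E] [Norm A] [Norm E]
    extends Inner A E where
  inner_add_right {x} {y} {z} : inner x (y + z) = inner x y + inner x z
  inner_self_nonneg {x} : 0 ≤ inner x x
  inner_self {x} : inner x x = 0 ↔ x = 0
  inner_op_smul_right {a : A} {x y : E} : inner x (y <• a) = inner x y * a
  inner_smul_right_complex {z : ℂ} {x} {y} : inner x (z • y) = z • inner x y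
  star_inner x y : star (inner x y) = inner y x
  norm_eq_sqrt_norm_inner_self x : ‖x‖ = √‖inner x x‖

section

variable {A : Type*} [CStarAlgebra A] [PartialOrder A] [StarOrderedRing A]
variable {E : Type*} [NormedAddCommGroup E] [NormedSpace ℂ E] [SMul Aᵐᵒᵖ E]
  [RightCStarModule A E] [CompleteSpace E]

local notation "⟪" x ", " y "⟫" => inner (𝕜 := A) x y

/-- `T` is a bounded adjointable `A`-linear operator with adjoint `T'`. -/
def IsAdjointableWith (T T' : E →L[ℂ] E) : Prop :=
  (∀ (a : A) (x : E), T (x <• a) = T x <• a) ∧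
  ∀ x y : E, ⟪T x, y⟫ = ⟪x, T' y⟫

/-- The orthogonal complement of a subset of a Hilbert C*-module. -/
def ortho (W : Set E) : Set E := {y | ∀ x ∈ W, ⟪x, y⟫ = (0 : A)}

/-- `W` is orthogonally complemented in `E`. -/
def OrthoComplemented (W : Set E) : Prop :=
  ∀ z : E, ∃ x ∈ W, ∃ y ∈ ortho (A := A) W, z = x + y

/-- `W` is a closed `A`-submodule of `E`. -/
def IsClosedSubmodule (W : Submodule ℂ E) : Prop :=
  IsClosed (W : Set E) ∧ ∀ (a : A), ∀ x ∈ W, x <• a ∈ W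

/-- An orthogonal projection in `L(E)`: an `A`-linear, idempotent, self-adjoint operator. -/
def IsOrthoProjection (P : E →L[ℂ] E) : Prop :=
  (∀ (a : A) (x : E), P (x <• a) = P x <• a) ∧ P.comp P = P ∧
  ∀ x y : E, ⟪P x, y⟫ = ⟪x, P y⟫

/-- A "compact" operator on a Hilbert C*-module: a member of the closure of the span
of the rank-one operators `z ↦ x ⟨y, z⟩`. -/
def IsCompactOp (K : E →L[ℂ] E) : Prop :=
  K ∈ closure (Submodule.span ℂ
    {S : E →L[ℂ] E | ∃ x y : E, ∀ z : E, S z = x <• ⟪y, z⟫} : Set (E →L[ℂ] E))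

/-- `E` is a finitely generated Hilbert `A`-module. -/
def IsFinGen : Prop :=
  ∃ (n : ℕ) (g : Fin n → E), ∀ x : E,
    x ∈ Submodule.span ℂ {y : E | ∃ (i : Fin n) (a : A), y = g i <• a}

/-- `T` is invertible in `L(E)`, the bounded adjointable operators. -/
def InvertibleInL (T : E →L[ℂ] E) : Prop :=
  ∃ S S' : E →L[ℂ] E, IsAdjointableWith (A := A) S S' ∧ S.comp T = 1 ∧ T.comp S = 1

section Ring

variable {R : Type*} [Ring R] {s t : R}

theorem one_sub_mul_mul_eq_zero (h : s * (t * s) = t * s) : (1 - s) * t * s = 0 := by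
  rw [sub_mul, one_mul, sub_mul, mul_assoc, h, sub_self]

theorem one_sub_mul_mul_one_sub_pow (h : s * (t * s) = t * s) (k : ℕ) :
    (1 - s) * t * (1 - s) ^ k = (1 - s) * t := by
  induction k with
  | zero => rw [pow_zero, mul_one]
  | succ k ih =>
    rw [pow_succ, ← mul_assoc, ih, mul_sub, mul_one, one_sub_mul_mul_eq_zero h, sub_zero]

end Ring

namespace ContinuousLinearMap

variable {R M : Type*} [Ring R] [TopologicalSpace M] [AddCommGroup M] [IsTopologicalAddGroup M]
  [Module R M] {S T : M →L[R] M}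

theorem one_sub_apply_apply_eq_zero_of_pow_apply_eq_zero (h : S * (T * S) = T * S) {n : ℕ}
    {x : M} (hx : ((1 - S) ^ n) x = 0) : (1 - S) (T x) = 0 := by
  rw [← mul_apply_eq_comp, ← one_sub_mul_mul_one_sub_pow h n, mul_apply_eq_comp, hx, map_zero]

theorem pow_apply_eq_zero_of_apply_eq_zero {U : M →L[R] M} {y : M} (hy : U y = 0) {n : ℕ}
    (hn : 0 < n) : (U ^ n) y = 0 := by
  obtain ⟨m, rfl⟩ := Nat.exists_eq_succ_of_ne_zero hn.ne'
  rw [pow_succ, mul_apply_eq_comp, hy, map_zero]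

end ContinuousLinearMap

theorem stmt4_general (T S : E →L[ℂ] E)
    (heq : S.comp (T.comp S) = T.comp S) :
    ∀ n : ℕ, 0 < n → ∀ x : E, ((1 - S) ^ n) x = 0 →
      (1 - S) (T x) = 0 ∧ ((1 - S) ^ n) (T x) = 0 := by
  intro n hn x hx
  have hker : (1 - S) (T x) = 0 :=
    ContinuousLinearMap.one_sub_apply_apply_eq_zero_of_pow_apply_eq_zero heq hx
  exact ⟨hker, ContinuousLinearMap.pow_apply_eq_zero_of_apply_eq_zero hker hn⟩

/-- If `STS = TS`, `0 ≠ S ≠ I`, and the closure of `Ran S` and `Ker (I - S)` are orthogonally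
complemented, then `T` maps `Ker ((I - S)^n)` into `Ker (I - S)`; consequently `Ker ((I - S)^n)`
is `T`-invariant. -/
theorem stmt4 (T T' S S' : E →L[ℂ] E)
    (hT : IsAdjointableWith (A := A) T T') (hS : IsAdjointableWith (A := A) S S')
    (hS0 : S ≠ 0) (hSI : S ≠ 1) (heq : S.comp (T.comp S) = T.comp S)
    (hR : OrthoComplemented (A := A) (closure (Set.range S)))
    (hK : OrthoComplemented (A := A) {x : E | S x = x}) :
    ∀ n : ℕ, 0 < n → ∀ x : E, ((1 - S) ^ n) x = 0 →
      (1 - S) (T x) = 0 ∧ ((1 - S) ^ n) (T x) = 0 :=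
  stmt4_general T S heq

end
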